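/- arXiv:1301.2860 — 3 statements merged into one kernel-verified Lean document; each statement's English description precedes it below -/
import Mathlib

section
/- Let X and X' be distinct b×m matrices over F_q. Choose t elements r_1,...,r_t independently and uniformly from F_q, and form the m×t matrix D with entries D_{k,j} = r_j^k. Then the probability that X D = X' D is at most (m/q)^t. -/
/-!
Pick a row `i` in which `X` and `X'` differ and let `p(T) = ∑ₖ (X - X')ᵢₖ Tᵏ⁺¹`, a nonzero
polynomial of degree at most `m`. If `X D = X' D` then every `r_j` is a root of `p`; as `p` has
at most `m` roots, at most `m ^ t` of the `q ^ t` tuples `r` qualify.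
-/

open Finset Polynomial

lemma card_filter_sum_mul_pow_succ_eq_zero_le {R : Type*} [CommRing R] [IsDomain R] [Fintype R]
    [DecidableEq R] {m : ℕ} {v : Fin m → R} (hv : v ≠ 0) :
    #{x : R | ∑ k, v k * x ^ ((k : ℕ) + 1) = 0} ≤ m := by
  let p : R[X] := ∑ k, C (v k) * X ^ ((k : ℕ) + 1)
  have hcoeff (k : Fin m) : p.coeff ((k : ℕ) + 1) = v k := by
    simp [p, finsetSum_coeff, coeff_X_pow, Fin.val_inj]
  have hp : p ≠ 0 := by
    obtain ⟨k, hk⟩ := Function.ne_iff.mp hv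
    exact fun h ↦ hk (by rw [← hcoeff k, h, coeff_zero, Pi.zero_apply])
  have hdeg : p.natDegree ≤ m :=
    natDegree_sum_le_of_forall_le _ _ fun k _ ↦
      (natDegree_C_mul_X_pow_le _ _).trans k.isLt
  calc #{x : R | ∑ k, v k * x ^ ((k : ℕ) + 1) = 0}
      ≤ #p.roots.toFinset := card_le_card fun x hx ↦ by
        simpa [p, mem_roots hp, eval_finsetSum] using hx
    _ ≤ Multiset.card p.roots := Multiset.toFinset_card_le _
    _ ≤ m := (card_roots' p).trans hdeg

/-- For distinct `b×m` matrices `X ≠ X'` over `F_q`, with `t` i.i.d. uniform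
points `r_1,…,r_t` and the Vandermonde-type matrix `D` with `D_{k,j} = r_j^k`, the
probability that `X D = X' D` is at most `(m/q)^t`. -/
theorem stmt_1 (q b m t : ℕ) (F : Type*) [Field F] [Fintype F] [DecidableEq F]
    (hq : Fintype.card F = q)
    (X X' : Matrix (Fin b) (Fin m) F) (hXX : X ≠ X') :
    ((Finset.univ.filter (fun r : Fin t → F =>
        X * (Matrix.of fun (k : Fin m) (j : Fin t) => (r j) ^ ((k : ℕ) + 1))
          = X' * (Matrix.of fun (k : Fin m) (j : Fin t) => (r j) ^ ((k : ℕ) + 1)))).card : ℝ)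
        / (Fintype.card (Fin t → F))
      ≤ ((m : ℝ) / q) ^ t := by
  obtain ⟨i, hi⟩ : ∃ i, X i ≠ X' i := Function.ne_iff.mp hXX
  let D (r : Fin t → F) : Matrix (Fin m) (Fin t) F := .of fun k j ↦ r j ^ ((k : ℕ) + 1)
  have hsub : ({r | X * D r = X' * D r} : Finset _) ⊆
      Fintype.piFinset fun _ ↦ {x : F | ∑ k, (X i - X' i) k * x ^ ((k : ℕ) + 1) = 0} := by
    intro r hr
    simp only [mem_filter, mem_univ, true_and, Fintype.mem_piFinset] at hr ⊢
    intro j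
    simpa [D, Matrix.mul_apply, sub_mul, sub_eq_zero] using congrArg (· i j) hr
  have hcard : #{r | X * D r = X' * D r} ≤ m ^ t := by
    grw [card_le_card hsub, Fintype.card_piFinset_const,
      card_filter_sum_mul_pow_succ_eq_zero_le (sub_ne_zero.mpr hi)]
  change (#{r | X * D r = X' * D r} : ℝ) / _ ≤ _
  rw [Fintype.card_pi_const, hq, Nat.cast_pow, div_pow]
  gcongr
  exact_mod_cast hcard
end

section
/- Let T ∈ F_q^{M×c} have rank M over the finite field F_q, and let K ∈ F_q^{c×b} have i.i.d. uniform entries with b ≤ M. Then the probability that T K fails to have full column rank b is at most b/q. -/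
open Finset Module Matrix

section Aux

variable {M c b : ℕ} {F : Type*} [Field F] [Fintype F] [DecidableEq F]

/-- The linear map `K ↦ (T * K) *ᵥ v`. -/
private def psiMap (T : Matrix (Fin M) (Fin c) F) (v : Fin b → F) :
    Matrix (Fin c) (Fin b) F →ₗ[F] (Fin M → F) where
  toFun K := (T * K) *ᵥ v
  map_add' K L := by rw [Matrix.mul_add, Matrix.add_mulVec]
  map_smul' a K := by
    rw [RingHom.id_apply, Matrix.mul_smul, Matrix.smul_mulVec]

private lemma psiMap_surjective (T : Matrix (Fin M) (Fin c) F) (hT : T.rank = M)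
    (v : Fin b → F) (j : Fin b) (hv : v j = 1) :
    Function.Surjective (psiMap T v) := by
  have hTs : Function.Surjective T.mulVecLin := by
    rw [← LinearMap.range_eq_top]
    apply Submodule.eq_top_of_finrank_eq
    rw [Module.finrank_fin_fun]
    exact hT
  intro y
  obtain ⟨x, hx⟩ := hTs y
  refine ⟨Matrix.of (fun i k => if k = j then x i else 0), ?_⟩
  have hKv : (Matrix.of (fun i k => if k = j then x i else 0) : Matrix (Fin c) (Fin b) F) *ᵥ v
      = x := by
    funext i
    simp [Matrix.mulVec, dotProduct, ite_mul, hv]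
  simp only [psiMap, LinearMap.coe_mk, AddHom.coe_mk, ← Matrix.mulVec_mulVec, hKv]
  rw [← Matrix.mulVecLin_apply, hx]

/-- Counting the fiber: for `v` with some coordinate equal to `1`, the number of `K`
with `(T*K) *ᵥ v = 0` times `|F|^M` is the total number of matrices. -/
private lemma fiber_card (T : Matrix (Fin M) (Fin c) F) (hT : T.rank = M)
    (v : Fin b → F) (j : Fin b) (hv : v j = 1) :
    (univ.filter fun K : Matrix (Fin c) (Fin b) F => (T * K) *ᵥ v = 0).card
      * Fintype.card F ^ M = Fintype.card (Matrix (Fin c) (Fin b) F) := by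
  classical
  set ψ := psiMap T v with hψ
  have hψs := psiMap_surjective T hT v j hv
  have h1 : (univ.filter fun K : Matrix (Fin c) (Fin b) F => (T * K) *ᵥ v = 0).card
      = Nat.card (LinearMap.ker ψ) := by
    rw [Nat.card_eq_fintype_card, Fintype.card_subtype]
    congr 1
    ext K
    simp [LinearMap.mem_ker, hψ, psiMap]
  have h2 := Submodule.card_eq_card_quotient_mul_card (LinearMap.ker ψ)
  have h3 : Nat.card (Matrix (Fin c) (Fin b) F ⧸ LinearMap.ker ψ) = Fintype.card F ^ M := by
    rw [Nat.card_congr (ψ.quotKerEquivOfSurjective hψs).toEquiv]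
    simp [Nat.card_eq_fintype_card, Fintype.card_fun]
  rw [h1, ← h3, ← h2, Nat.card_eq_fintype_card]

/-- Counting normalized vectors: `#{v : v j = 1} * |F| = |F|^b` (as card of all functions). -/
private lemma normalized_card (j : Fin b) :
    (univ.filter fun v : Fin b → F => v j = 1).card * Fintype.card F
      = Fintype.card (Fin b → F) := by
  classical
  rw [← Finset.card_univ (α := F), ← Finset.card_product, ← Finset.card_univ]
  apply Finset.card_bij (fun p _ => Function.update p.1 j p.2)
  · intro p _; exact mem_univ _
  · rintro ⟨v, a⟩ hva ⟨w, e⟩ hwe h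
    simp only [Finset.mem_product, Finset.mem_filter] at hva hwe
    have ha : a = e := by
      have := congrFun h j
      simpa using this
    have hv : v = w := by
      funext k
      by_cases hk : k = j
      · subst hk; rw [hva.1.2, hwe.1.2]
      · have := congrFun h k
        simpa [Function.update_of_ne hk] using this
    simp [ha, hv]
  · intro w _
    refine ⟨(Function.update w j 1, w j), ?_, ?_⟩
    · simp [Finset.mem_product, Finset.mem_filter]
    · funext k
      by_cases hk : k = j
      · subst hk; simp
      · simp [Function.update_of_ne hk]

end Aux

/-- For a fixed full-row-rank `T ∈ F_q^{M×c}` and a random `K ∈ F_q^{c×b}`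
with i.i.d. uniform entries, where `b ≤ M`, the probability that `T K` fails to have
full column rank `b` is at most `b/q`. -/
theorem stmt_5 (q M c b : ℕ) (F : Type*) [Field F] [Fintype F] [DecidableEq F]
    (hq : Fintype.card F = q)
    (T : Matrix (Fin M) (Fin c) F) (hT : T.rank = M) (hb : b ≤ M) :
    ((Finset.univ.filter
        (fun K : Matrix (Fin c) (Fin b) F => (T * K).rank < b)).card : ℝ)
        / (Fintype.card (Matrix (Fin c) (Fin b) F))
      ≤ (b : ℝ) / q := by
  classical
  subst hq
  set f := Fintype.card F with hf
  have hf1 : 1 ≤ f := Fintype.card_pos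
  set CM := Fintype.card (Matrix (Fin c) (Fin b) F) with hCM
  have hCMpos : 0 < CM := Fintype.card_pos
  -- the key counting inequality in ℕ
  have key : (univ.filter
      (fun K : Matrix (Fin c) (Fin b) F => (T * K).rank < b)).card * f ≤ b * CM := by
    -- union bound
    have hsub : (univ.filter (fun K : Matrix (Fin c) (Fin b) F => (T * K).rank < b))
        ⊆ univ.biUnion (fun j : Fin b =>
            (univ.filter fun v : Fin b → F => v j = 1).biUnion (fun v =>
              univ.filter fun K : Matrix (Fin c) (Fin b) F => (T * K) *ᵥ v = 0)) := by
      intro K hK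
      rw [Finset.mem_filter] at hK
      have hK' := hK.2
      have hker : LinearMap.ker (T * K).mulVecLin ≠ ⊥ := by
        intro h
        have hrn := LinearMap.finrank_range_add_finrank_ker (T * K).mulVecLin
        rw [h, finrank_bot, add_zero, Module.finrank_fin_fun] at hrn
        have : (T * K).rank = b := hrn
        omega
      obtain ⟨v, hv, hv0⟩ := Submodule.exists_mem_ne_zero_of_ne_bot hker
      rw [LinearMap.mem_ker, Matrix.mulVecLin_apply] at hv
      obtain ⟨j, hj⟩ := Function.ne_iff.mp hv0
      refine Finset.mem_biUnion.mpr ⟨j, mem_univ _, Finset.mem_biUnion.mpr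
        ⟨(v j)⁻¹ • v, ?_, ?_⟩⟩
      · rw [Finset.mem_filter]
        refine ⟨mem_univ _, ?_⟩
        simp [inv_mul_cancel₀ hj]
      · rw [Finset.mem_filter]
        refine ⟨mem_univ _, ?_⟩
        rw [Matrix.mulVec_smul, hv, smul_zero]
    have h1 : (univ.filter
        (fun K : Matrix (Fin c) (Fin b) F => (T * K).rank < b)).card
        ≤ ∑ j : Fin b, ∑ v ∈ univ.filter (fun v : Fin b → F => v j = 1),
            (univ.filter fun K : Matrix (Fin c) (Fin b) F => (T * K) *ᵥ v = 0).card := by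
      refine (Finset.card_le_card hsub).trans ?_
      refine (Finset.card_biUnion_le).trans ?_
      exact Finset.sum_le_sum fun j _ => Finset.card_biUnion_le
    -- multiply by f^M
    have h2 : (univ.filter
        (fun K : Matrix (Fin c) (Fin b) F => (T * K).rank < b)).card * f ^ M
        ≤ ∑ j : Fin b, (univ.filter fun v : Fin b → F => v j = 1).card * CM := by
      calc (univ.filter
          (fun K : Matrix (Fin c) (Fin b) F => (T * K).rank < b)).card * f ^ M
          ≤ (∑ j : Fin b, ∑ v ∈ univ.filter (fun v : Fin b → F => v j = 1),
            (univ.filter fun K : Matrix (Fin c) (Fin b) F => (T * K) *ᵥ v = 0).card) * f ^ M :=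
            Nat.mul_le_mul_right _ h1
        _ = ∑ j : Fin b, ∑ v ∈ univ.filter (fun v : Fin b → F => v j = 1),
            (univ.filter fun K : Matrix (Fin c) (Fin b) F => (T * K) *ᵥ v = 0).card * f ^ M := by
            rw [Finset.sum_mul]
            exact Finset.sum_congr rfl fun j _ => Finset.sum_mul _ _ _
        _ = ∑ j : Fin b, ∑ v ∈ univ.filter (fun v : Fin b → F => v j = 1), CM := by
            refine Finset.sum_congr rfl fun j _ => Finset.sum_congr rfl fun v hv => ?_
            rw [Finset.mem_filter] at hv
            exact fiber_card T hT v j hv.2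
        _ = ∑ j : Fin b, (univ.filter fun v : Fin b → F => v j = 1).card * CM := by
            simp [Finset.sum_const, mul_comm]
    -- bound each summand
    have h3 : ∀ j : Fin b, (univ.filter fun v : Fin b → F => v j = 1).card * f ≤ f ^ M := by
      intro j
      rw [normalized_card j, Fintype.card_fun, Fintype.card_fin]
      exact Nat.pow_le_pow_right hf1 hb
    have h4 : (univ.filter
        (fun K : Matrix (Fin c) (Fin b) F => (T * K).rank < b)).card * f * f ^ M
        ≤ (b * CM) * f ^ M := by
      calc (univ.filter
          (fun K : Matrix (Fin c) (Fin b) F => (T * K).rank < b)).card * f * f ^ M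
          = (univ.filter
            (fun K : Matrix (Fin c) (Fin b) F => (T * K).rank < b)).card * f ^ M * f := by
            ring
        _ ≤ (∑ j : Fin b, (univ.filter fun v : Fin b → F => v j = 1).card * CM) * f :=
            Nat.mul_le_mul_right _ h2
        _ = ∑ j : Fin b, (univ.filter fun v : Fin b → F => v j = 1).card * f * CM := by
            rw [Finset.sum_mul]
            exact Finset.sum_congr rfl fun j _ => by ring
        _ ≤ ∑ j : Fin b, f ^ M * CM :=
            Finset.sum_le_sum fun j _ => Nat.mul_le_mul_right _ (h3 j)
        _ = (b * CM) * f ^ M := by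
            simp only [Finset.sum_const, Finset.card_univ, Fintype.card_fin, smul_eq_mul]
            ring
    exact Nat.le_of_mul_le_mul_right h4 (Nat.pow_pos (n := M) hf1)
  -- conclude over ℝ
  rw [div_le_div_iff₀ (by exact_mod_cast hCMpos) (by exact_mod_cast hf1)]
  exact_mod_cast key
end

section
/- Suppose for each j = 1,...,i, T_j ∈ F_q^{M_j×c_j} is a fixed full-row-rank matrix and K_j ∈ F_q^{c_j×b} has i.i.d. uniform entries, with b ≤ M_1 + ... + M_i. Then the stacked matrix T^{(i)} = [T_1 K_1; T_2 K_2; ...; T_i K_i] (vertical concatenation) has full column rank b with probability at least 1 − b/q. -/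
/-!
Since every `Tⱼ` has full row rank, `K ↦ [T₁ K₁; …; Tᵢ Kᵢ]` is a surjective additive map onto the
`N × b` matrices, `N = ∑ Mⱼ`. Its fibres are cosets of the kernel, all of the same size, so the
stacked matrix is uniformly distributed. Counting linearly independent column tuples, a uniform
`N × b` matrix has full column rank with probability
`∏_{k<b} (1 - q^k / q^N) ≥ 1 - ∑_{k<b} q^k / q^N ≥ 1 - b / q`.
-/

open Finset Matrix

theorem Finset.one_sub_sum_le_prod_one_sub {ι R : Type*} [CommRing R] [LinearOrder R]
    [IsStrictOrderedRing R] (s : Finset ι) {f : ι → R}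
    (h0 : ∀ k ∈ s, 0 ≤ f k) (h1 : ∀ k ∈ s, f k ≤ 1) :
    1 - ∑ k ∈ s, f k ≤ ∏ k ∈ s, (1 - f k) := by
  induction s using cons_induction with
  | empty => simp
  | cons a s _ ih =>
    simp only [mem_cons, forall_eq_or_imp] at h0 h1
    rw [sum_cons, prod_cons]
    have hs : 0 ≤ ∑ k ∈ s, f k := sum_nonneg h0.2
    nlinarith [mul_le_mul_of_nonneg_left (ih h0.2 h1.2) (sub_nonneg.2 h1.1)]

theorem one_sub_div_le_prod_one_sub_pow_div {q N b : ℕ} (hq : 0 < q) (hb : b ≤ N) :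
    1 - (b : ℝ) / q ≤ ∏ k : Fin b, (1 - (q : ℝ) ^ (k : ℕ) / q ^ N) := by
  have hq1 : (1 : ℝ) ≤ q := by exact_mod_cast hq
  have hterm (k : Fin b) : (q : ℝ) ^ (k : ℕ) / q ^ N ≤ 1 / q := by
    rw [div_le_div_iff₀ (by positivity) (by positivity), one_mul, ← pow_succ]
    exact pow_le_pow_right₀ hq1 (by omega)
  calc 1 - (b : ℝ) / q = 1 - ∑ _k : Fin b, 1 / (q : ℝ) := by simp [div_eq_mul_inv]
    _ ≤ 1 - ∑ k : Fin b, (q : ℝ) ^ (k : ℕ) / q ^ N :=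
      sub_le_sub_left (sum_le_sum fun k _ => hterm k) 1
    _ ≤ _ := one_sub_sum_le_prod_one_sub _ (fun k _ => by positivity)
      fun k _ => (hterm k).trans (div_le_one_of_le₀ hq1 (by positivity))

theorem AddMonoidHom.card_filter_comp_div_card_of_surjective {α β : Type*}
    [AddGroup α] [Fintype α] [AddGroup β] [Fintype β] [DecidableEq β]
    (f : α →+ β) (hf : Function.Surjective f) (P : β → Prop) [DecidablePred P] :
    (#{x | P (f x)} : ℝ) / Fintype.card α = #{y | P y} / Fintype.card β := by
  set c := #{x | f x = 0}
  have hfib (y : β) : #{x | f x = y} = c :=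
    AddMonoidHom.card_fiber_eq_of_mem_range f (hf y) (hf 0)
  have hα : Fintype.card α = Fintype.card β * c := by
    rw [← card_univ, card_eq_sum_card_fiberwise (fun x _ => mem_univ (f x))]
    simp [hfib]
  have hP : #{x | P (f x)} = #{y | P y} * c := by
    rw [card_eq_sum_card_fiberwise (t := {y | P y}) (fun x hx => by simpa using hx),
      sum_congr rfl fun y hy => ?_, sum_const, smul_eq_mul]
    rw [filter_filter, ← hfib y]
    congr 1
    exact filter_congr fun x _ => ⟨And.right, fun h => ⟨h ▸ (mem_filter.1 hy).2, h⟩⟩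
  have hc : (c : ℝ) ≠ 0 := by
    exact_mod_cast (card_pos.2 ⟨0, by simp⟩).ne'
  rw [hP, hα]
  push_cast
  rw [mul_div_mul_right _ _ hc]

namespace Matrix

theorem rank_eq_width_iff_linearIndependent_col {F m : Type*} [Field F] [Fintype m]
    {b : ℕ} (A : Matrix m (Fin b) F) : A.rank = b ↔ LinearIndependent F A.col := by
  rw [rank_eq_finrank_span_cols, linearIndependent_iff_card_eq_finrank_span]
  simp [Set.finrank, eq_comm]

theorem card_filter_rank_eq_width {F m : Type*} [Field F] [Fintype F] [Fintype m]
    [DecidableEq m] {b : ℕ} (hb : b ≤ Fintype.card m) :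
    #{A : Matrix m (Fin b) F | A.rank = b} =
      ∏ k : Fin b, (Fintype.card F ^ Fintype.card m - Fintype.card F ^ (k : ℕ)) := by
  have e : {A : Matrix m (Fin b) F // A.rank = b} ≃
      {s : Fin b → m → F // LinearIndependent F s} :=
    ((transposeAddEquiv m (Fin b) F).toEquiv.trans of.symm).subtypeEquiv
      rank_eq_width_iff_linearIndependent_col
  rw [← Fintype.card_subtype, ← Nat.card_eq_fintype_card, Nat.card_congr e,
    card_linearIndependent (by simpa using hb), Module.finrank_fintype_fun_eq_card]

theorem card_filter_rank_eq_width_div_card {F m : Type*} [Field F] [Fintype F]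
    [Fintype m] [DecidableEq m] {b : ℕ} (hb : b ≤ Fintype.card m) :
    (#{A : Matrix m (Fin b) F | A.rank = b} : ℝ) / Fintype.card (Matrix m (Fin b) F) =
      ∏ k : Fin b, (1 - (Fintype.card F : ℝ) ^ (k : ℕ) / Fintype.card F ^ Fintype.card m) := by
  set q := Fintype.card F
  set N := Fintype.card m
  have hle (k : Fin b) : q ^ (k : ℕ) ≤ q ^ N := Nat.pow_le_pow_right Fintype.card_pos (by omega)
  have hcard : (Fintype.card (Matrix m (Fin b) F) : ℝ) = ∏ _k : Fin b, (q : ℝ) ^ N := by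
    rw [prod_const, card_univ, Fintype.card_fin, ← pow_mul, mul_comm]
    exact_mod_cast Fintype.card_pi.trans (by simp [q, N, ← pow_mul])
  rw [card_filter_rank_eq_width hb, hcard, Nat.cast_prod, ← prod_div_distrib]
  refine prod_congr rfl fun k _ => ?_
  rw [Nat.cast_sub (hle k), sub_div]
  push_cast
  rw [div_self (by positivity)]

theorem surjective_mulVec_of_rank_eq_card_height {F m n : Type*} [Field F] [Fintype m]
    [Fintype n] {A : Matrix m n F} (hA : A.rank = Fintype.card m) :
    Function.Surjective A.mulVec := by
  have : LinearMap.range A.mulVecLin = ⊤ :=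
    Submodule.eq_top_of_finrank_eq (hA.trans (Module.finrank_fintype_fun_eq_card F).symm)
  exact LinearMap.range_eq_top.1 this

theorem surjective_mul_left_of_surjective_mulVec {R m n o : Type*} [Semiring R]
    [Fintype n] {A : Matrix m n R} (hA : Function.Surjective A.mulVec) :
    Function.Surjective fun B : Matrix n o R => A * B := by
  intro C
  choose B hB using fun k => hA fun i => C i k
  refine ⟨of fun l k => B k l, ?_⟩
  ext i k
  simpa [mul_apply, mulVec, dotProduct] using congrFun (hB k) i

section StackMul

variable {ι R n : Type*} [Semiring R] {m c : ι → Type*} [∀ j, Fintype (c j)]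

def stackMulHom (T : ∀ j, Matrix (m j) (c j) R) :
    (∀ j, Matrix (c j) n R) →+ Matrix (Σ j, m j) n R where
  toFun K := of fun p k => (T p.1 * K p.1) p.2 k
  map_zero' := by ext; simp
  map_add' K L := by ext; simp [Matrix.mul_add]

theorem stackMulHom_surjective {T : ∀ j, Matrix (m j) (c j) R}
    (hT : ∀ j, Function.Surjective (T j).mulVec) :
    Function.Surjective (stackMulHom (n := n) T) := by
  intro A
  choose K hK using fun j => surjective_mul_left_of_surjective_mulVec (o := n) (hT j)
    fun r k => A ⟨j, r⟩ k
  refine ⟨K, ?_⟩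
  ext ⟨j, r⟩ k
  simp [stackMulHom, hK]

end StackMul

end Matrix

open scoped Classical in
theorem stmt_14_general (q i b : ℕ) (F : Type*) [Field F] [Fintype F]
    (hq : Fintype.card F = q)
    (Mdim cdim : Fin i → ℕ)
    (T : ∀ j, Matrix (Fin (Mdim j)) (Fin (cdim j)) F)
    (hT : ∀ j, (T j).rank = Mdim j)
    (hb : b ≤ ∑ j, Mdim j) :
    1 - (b : ℝ) / q ≤
      ((Finset.univ.filter
          (fun K : ∀ j : Fin i, Matrix (Fin (cdim j)) (Fin b) F =>
            (Matrix.of fun (p : Σ j : Fin i, Fin (Mdim j)) (k : Fin b) =>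
                (T p.1 * K p.1) p.2 k).rank = b)).card : ℝ)
        / (Fintype.card (∀ j : Fin i, Matrix (Fin (cdim j)) (Fin b) F)) := by
  have hTsurj (j : Fin i) : Function.Surjective (T j).mulVec :=
    surjective_mulVec_of_rank_eq_card_height ((hT j).trans (Fintype.card_fin _).symm)
  have hN : b ≤ Fintype.card (Σ j : Fin i, Fin (Mdim j)) := by simpa using hb
  calc 1 - (b : ℝ) / q
      ≤ ∏ k : Fin b, (1 - (q : ℝ) ^ (k : ℕ) / q ^ Fintype.card (Σ j : Fin i, Fin (Mdim j))) :=
        one_sub_div_le_prod_one_sub_pow_div (hq ▸ Fintype.card_pos) hN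
    _ = _ := by
      rw [← hq, ← card_filter_rank_eq_width_div_card hN,
        ← (stackMulHom T).card_filter_comp_div_card_of_surjective (stackMulHom_surjective hTsurj)]
      rfl

open scoped Classical in
/-- With fixed full-row-rank `T_j ∈ F_q^{M_j×c_j}` and independent uniform
random `K_j ∈ F_q^{c_j×b}`, `b ≤ ∑ M_j`, the vertical stack of the `T_j K_j` has full
column rank `b` with probability at least `1 − b/q`. -/
theorem stmt_14 (q i b : ℕ) (F : Type*) [Field F] [Fintype F] [DecidableEq F]
    (hq : Fintype.card F = q)
    (Mdim cdim : Fin i → ℕ)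
    (T : ∀ j, Matrix (Fin (Mdim j)) (Fin (cdim j)) F)
    (hT : ∀ j, (T j).rank = Mdim j)
    (hb : b ≤ ∑ j, Mdim j) :
    1 - (b : ℝ) / q ≤
      ((Finset.univ.filter
          (fun K : ∀ j : Fin i, Matrix (Fin (cdim j)) (Fin b) F =>
            (Matrix.of fun (p : Σ j : Fin i, Fin (Mdim j)) (k : Fin b) =>
                (T p.1 * K p.1) p.2 k).rank = b)).card : ℝ)
        / (Fintype.card (∀ j : Fin i, Matrix (Fin (cdim j)) (Fin b) F)) :=
  stmt_14_general q i b F hq Mdim cdim T hT hb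
end
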